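/- Let {aᵢ ⊗ bᵢ : i = 1…d} be an orthonormal product basis of ℂ³ ⊗ ℂ^{d₂}, d = 3d₂. Then for every index κ ∈ {1…d} there exist indices λ, ν ∈ {1…d} such that {a_κ, a_λ, a_ν} is an orthonormal basis of ℂ³. -/

import Mathlib

/-!
Fix `κ` and let `S` be the set of indices `i` with `a_i ⊥ a_κ`. For `i ∉ S ∪ {κ}` orthogonality of
`a_i ⊗ b_i` and `a_κ ⊗ b_κ` forces `b_i ⊥ b_κ`. Completeness of the product basis, tested against
`e_j ⊗ b_κ` for the standard basis `(e_j)` of `ℂ³`, gives `∑ᵢ |⟪b_i, b_κ⟫|² = 3`, hence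
`∑_{i ∈ S} |⟪b_i, b_κ⟫|² = 2 > ‖b_κ‖²`. By Bessel's inequality the `b_i`, `i ∈ S`, are not
orthonormal: some `b_λ, b_ν` with `λ ≠ ν` in `S` are not orthogonal, which forces `a_λ ⊥ a_ν`.
-/

open scoped ComplexInnerProductSpace

/-- The tensor product of two vectors, realized concretely on `EuclideanSpace`:
`(a ⊗ b) (i, j) = a i * b j`. -/
noncomputable def eprod {ι γ : Type*} (a : EuclideanSpace ℂ ι) (b : EuclideanSpace ℂ γ) :
    EuclideanSpace ℂ (ι × γ) :=
  WithLp.toLp 2 (fun p : ι × γ => a p.1 * b p.2)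

section ProductFamily

variable {ι γ : Type*} [Fintype ι] [Fintype γ]

theorem inner_eprod (a c : EuclideanSpace ℂ ι) (b d : EuclideanSpace ℂ γ) :
    ⟪eprod a b, eprod c d⟫ = ⟪a, c⟫ * ⟪b, d⟫ := by
  simp only [eprod, PiLp.inner_apply, RCLike.inner_apply, Fintype.sum_prod_type, map_mul,
    Finset.sum_mul_sum]
  exact Finset.sum_congr rfl fun i _ => Finset.sum_congr rfl fun j _ => by ring

theorem norm_eprod (a : EuclideanSpace ℂ ι) (b : EuclideanSpace ℂ γ) :
    ‖eprod a b‖ = ‖a‖ * ‖b‖ := by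
  have h : ‖eprod a b‖ ^ 2 = (‖a‖ * ‖b‖) ^ 2 := by
    rw [@norm_sq_eq_re_inner ℂ, inner_eprod, inner_self_eq_norm_sq_to_K,
      inner_self_eq_norm_sq_to_K]
    norm_cast
    ring
  exact (pow_left_inj₀ (norm_nonneg _) (by positivity) two_ne_zero).1 h

variable {n : Type*} {a : n → EuclideanSpace ℂ ι} {b : n → EuclideanSpace ℂ γ}

theorem inner_eq_zero_or_of_orthonormal_eprod (hB : Orthonormal ℂ fun i => eprod (a i) (b i))
    {i j : n} (hij : i ≠ j) : ⟪a i, a j⟫ = 0 ∨ ⟪b i, b j⟫ = 0 := by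
  have h : ⟪eprod (a i) (b i), eprod (a j) (b j)⟫ = 0 := hB.2 hij
  rwa [inner_eprod, mul_eq_zero] at h

theorem sum_norm_sq_mul_norm_inner_sq_eq [Fintype n]
    (hB : Orthonormal ℂ fun i => eprod (a i) (b i))
    (hcard : Fintype.card n = Fintype.card ι * Fintype.card γ) (y : EuclideanSpace ℂ γ) :
    ∑ i, ‖a i‖ ^ 2 * ‖⟪b i, y⟫‖ ^ 2 = Fintype.card ι * ‖y‖ ^ 2 := by
  classical
  have hspan : Submodule.span ℂ (Set.range fun i => eprod (a i) (b i)) = ⊤ :=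
    hB.linearIndependent.span_eq_top_of_card_eq_finrank' (by simp [hcard])
  let B := OrthonormalBasis.mk hB hspan.ge
  let e := EuclideanSpace.basisFun ι ℂ
  calc ∑ i, ‖a i‖ ^ 2 * ‖⟪b i, y⟫‖ ^ 2
      = ∑ i, ∑ j, ‖⟪B i, eprod (e j) y⟫‖ ^ 2 := by
        refine Finset.sum_congr rfl fun i _ => ?_
        simp only [B, OrthonormalBasis.coe_mk, inner_eprod, norm_mul, mul_pow,
          ← Finset.sum_mul, e.sum_sq_norm_inner_left]
    _ = ∑ j, ‖eprod (e j) y‖ ^ 2 := by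
        rw [Finset.sum_comm]
        exact Finset.sum_congr rfl fun j _ => B.sum_sq_norm_inner_right _
    _ = Fintype.card ι * ‖y‖ ^ 2 := by
        simp [norm_eprod, e.orthonormal.1]

theorem sum_norm_inner_sq_eq_add_sum_filter [Fintype n]
    (hB : Orthonormal ℂ fun i => eprod (a i) (b i)) {κ : n} (hκ : a κ ≠ 0)
    [DecidablePred fun i => ⟪a κ, a i⟫ = 0] :
    ∑ i, ‖⟪b i, b κ⟫‖ ^ 2 =
      ‖b κ‖ ^ 4 + ∑ i ∈ Finset.univ.filter fun i => ⟪a κ, a i⟫ = 0, ‖⟪b i, b κ⟫‖ ^ 2 := by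
  rw [← Finset.sum_filter_add_sum_filter_not Finset.univ (fun i => ⟪a κ, a i⟫ = 0), add_comm]
  congr 1
  rw [Finset.sum_eq_single_of_mem κ (by simpa using hκ)]
  · rw [inner_self_eq_norm_sq_to_K]
    norm_cast
    rw [abs_of_nonneg (by positivity)]
    ring
  · intro i hi hiκ
    have hi' : ⟪a i, a κ⟫ ≠ 0 := by
      rw [Ne, inner_eq_zero_symm]
      exact (Finset.mem_filter.1 hi).2
    simp [(inner_eq_zero_or_of_orthonormal_eprod hB hiκ).resolve_left hi']

end ProductFamily

section InnerProductSpace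

variable {𝕜 E : Type*} [RCLike 𝕜] [NormedAddCommGroup E] [InnerProductSpace 𝕜 E]

theorem exists_ne_inner_ne_zero_of_norm_sq_lt_sum {n : Type*} {v : n → E} {s : Finset n}
    (hv : ∀ i ∈ s, ‖v i‖ = 1) (x : E) (h : ‖x‖ ^ 2 < ∑ i ∈ s, ‖inner 𝕜 (v i) x‖ ^ 2) :
    ∃ i ∈ s, ∃ j ∈ s, i ≠ j ∧ inner 𝕜 (v i) (v j) ≠ 0 := by
  by_contra! hcon
  have hon : Orthonormal 𝕜 fun i : s => v i :=
    ⟨fun i => hv i i.2, fun i j hij => hcon i i.2 j j.2 (Subtype.coe_ne_coe.2 hij)⟩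
  have hle := hon.sum_inner_products_le x (s := Finset.univ)
  rw [Finset.sum_coe_sort s fun i => ‖inner 𝕜 (v i) x‖ ^ 2] at hle
  exact hle.not_gt h

theorem orthonormal_vecCons_three {x y z : E} (hx : ‖x‖ = 1) (hy : ‖y‖ = 1) (hz : ‖z‖ = 1)
    (hxy : inner 𝕜 x y = 0) (hxz : inner 𝕜 x z = 0) (hyz : inner 𝕜 y z = 0) :
    Orthonormal 𝕜 ![x, y, z] := by
  have hyx := inner_eq_zero_symm.1 hxy
  have hzx := inner_eq_zero_symm.1 hxz
  have hzy := inner_eq_zero_symm.1 hyz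
  rw [orthonormal_iff_ite]
  intro i j
  fin_cases i <;> fin_cases j <;> simp [hx, hy, hz, hxy, hxz, hyz, hyx, hzx, hzy]

theorem Orthonormal.span_triple_eq_top [FiniteDimensional 𝕜 E] {x y z : E}
    (h : Orthonormal 𝕜 ![x, y, z]) (hE : Module.finrank 𝕜 E = 3) :
    Submodule.span 𝕜 {x, y, z} = ⊤ := by
  have hrange : Set.range ![x, y, z] = {x, y, z} := by
    simp only [Matrix.range_cons, Matrix.range_empty, Set.union_empty, Set.singleton_union]
  rw [← hrange]
  exact h.linearIndependent.span_eq_top_of_card_eq_finrank' (by simp [hE])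

end InnerProductSpace

theorem qutrit_factor_contains_orthonormal_basis_general {d₂ : ℕ}
    (a : Fin (3 * d₂) → EuclideanSpace ℂ (Fin 3))
    (b : Fin (3 * d₂) → EuclideanSpace ℂ (Fin d₂))
    (ha : ∀ i, ‖a i‖ = 1) (hb : ∀ i, ‖b i‖ = 1)
    (hB : Orthonormal ℂ (fun i => eprod (a i) (b i))) :
    ∀ κ, ∃ l ν, Orthonormal ℂ ![a κ, a l, a ν] ∧
      Submodule.span ℂ {a κ, a l, a ν} = ⊤ := by
  classical
  intro κ
  have htotal : ∑ i, ‖⟪b i, b κ⟫‖ ^ 2 = 3 := by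
    simpa [ha, hb] using sum_norm_sq_mul_norm_inner_sq_eq hB (by simp) (b κ)
  have hκ : a κ ≠ 0 := norm_ne_zero_iff.1 (by simp [ha])
  rw [sum_norm_inner_sq_eq_add_sum_filter hB hκ, hb] at htotal
  obtain ⟨l, hl, ν, hν, hlν, hbl⟩ :=
    exists_ne_inner_ne_zero_of_norm_sq_lt_sum (fun i _ => hb i) (b κ) (by rw [hb]; linarith)
  have hal := (inner_eq_zero_or_of_orthonormal_eprod hB hlν).resolve_right hbl
  simp only [Finset.mem_filter, Finset.mem_univ, true_and] at hl hν
  have hON := orthonormal_vecCons_three (ha κ) (ha l) (ha ν) hl hν hal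
  exact ⟨l, ν, hON, hON.span_triple_eq_top finrank_euclideanSpace_fin⟩

/-- For an orthonormal product basis `{aᵢ ⊗ bᵢ : i = 1…d}` of `ℂ³ ⊗ ℂ^{d₂}`, `d = 3d₂`,
and every index `κ`, there are indices `λ, ν` such that `{a_κ, a_λ, a_ν}` is an
orthonormal basis of `ℂ³`. -/
theorem qutrit_factor_contains_orthonormal_basis {d₂ : ℕ} (hd₂ : 0 < d₂)
    (a : Fin (3 * d₂) → EuclideanSpace ℂ (Fin 3))
    (b : Fin (3 * d₂) → EuclideanSpace ℂ (Fin d₂))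
    (ha : ∀ i, ‖a i‖ = 1) (hb : ∀ i, ‖b i‖ = 1)
    (hB : Orthonormal ℂ (fun i => eprod (a i) (b i))) :
    ∀ κ, ∃ l ν, Orthonormal ℂ ![a κ, a l, a ν] ∧
      Submodule.span ℂ {a κ, a l, a ν} = ⊤ :=
  qutrit_factor_contains_orthonormal_basis_general a b ha hb hB
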